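/- arXiv:1902.04548 — 2 statements merged into one kernel-verified Lean document; each statement's English description precedes it below -/
import Mathlib

section
/- Let α = (α_i)_{i∈ℕ} be a summable sequence of positive reals, non-increasing, with α_1 ≤ (1/n) Σ_i α_i =: a. Then among all positive definite n×n matrices G whose eigenvalue sequence λ(G) (in non-increasing order) majorizes α (i.e., Σ_{i≤m} λ_i ≥ Σ_{i≤m} α_i for m < n and Σ_{i≤n} λ_i = Σ_i α_i), the matrix G* = a·Iₙ uniquely minimizes trace(G⁻¹), with minimal value n/a. -/
/-!
If `G` is positive definite with eigenvalues `λ i` summing to `n * a`, then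
`trace G⁻¹ = ∑ i, (λ i)⁻¹`, and the tangent line of the convex function `x ↦ x⁻¹` at `a` gives
`x⁻¹ = (2 * a - x) / a ^ 2 + (x - a) ^ 2 / (a ^ 2 * x) ≥ (2 * a - x) / a ^ 2`. Summing over the
eigenvalues yields `trace G⁻¹ ≥ n / a`, with equality only if every eigenvalue equals `a`, that is,
`G = a • 1`.
-/

/-- The eigenvalue sequence of the Hermitian matrix `G` (suitably reordered so as to be
non-increasing) majorizes the sequence `α`. -/
def EigMajorizes {n : ℕ} {G : Matrix (Fin n) (Fin n) ℝ} (hG : G.IsHermitian)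
    (α : ℕ → ℝ) : Prop :=
  ∃ σ : Equiv.Perm (Fin n),
    (∀ i j : Fin n, i ≤ j → hG.eigenvalues (σ j) ≤ hG.eigenvalues (σ i)) ∧
    (∀ m : ℕ, m < n →
      ∑ i ∈ Finset.range m, α i ≤
        ∑ i ∈ Finset.univ.filter (fun i : Fin n => (i : ℕ) < m), hG.eigenvalues (σ i)) ∧
    (∑ i : Fin n, hG.eigenvalues i) = ∑' i, α i

open Finset Matrix
open scoped ComplexOrder

namespace Matrix

variable {ι 𝕜 : Type*} [Fintype ι] [DecidableEq ι] [RCLike 𝕜] {A : Matrix ι ι 𝕜}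

theorem IsHermitian.trace_cfc (hA : A.IsHermitian) (f : ℝ → ℝ) :
    (cfc f A).trace = ∑ i, (f (hA.eigenvalues i) : 𝕜) := by
  rw [hA.cfc_eq, IsHermitian.cfc, Unitary.conjStarAlgAut_apply, trace_mul_cycle,
    Unitary.coe_star_mul_self, one_mul, trace_diagonal]
  rfl

theorem PosDef.trace_inv (hA : A.PosDef) :
    A⁻¹.trace = ∑ i, ((hA.1.eigenvalues i)⁻¹ : 𝕜) := by
  rw [nonsing_inv_eq_ringInverse, ← cfc_ringInverse_id (R := ℝ) A hA.isUnit hA.1.isSelfAdjoint,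
    hA.1.trace_cfc]
  simp

theorem IsHermitian.eq_smul_one_of_eigenvalues_eq (hA : A.IsHermitian) {c : ℝ}
    (h : ∀ i, hA.eigenvalues i = c) : A = c • (1 : Matrix ι ι 𝕜) := by
  have hspec : (spectrum ℝ A).EqOn id (fun _ ↦ c) := by
    rw [hA.spectrum_real_eq_range_eigenvalues]
    rintro - ⟨i, rfl⟩
    exact h i
  rw [← cfc_id ℝ A hA.isSelfAdjoint, cfc_congr hspec, cfc_const c A hA.isSelfAdjoint,
    Algebra.algebraMap_eq_smul_one]

theorem IsHermitian.eigenvalues_smul_one {c : ℝ} (h : (c • (1 : Matrix ι ι 𝕜)).IsHermitian)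
    (i : ι) : h.eigenvalues i = c := by
  have : Nonempty ι := ⟨i⟩
  have hspec : spectrum ℝ (c • (1 : Matrix ι ι 𝕜)) = {c} := by
    rw [← Algebra.algebraMap_eq_smul_one, spectrum.scalar_eq]
  simpa [hspec] using h.eigenvalues_mem_spectrum_real i

end Matrix

theorem inv_eq_tangent_add_sq_div {x a : ℝ} (hx : x ≠ 0) (ha : a ≠ 0) :
    x⁻¹ = (2 * a - x) / a ^ 2 + (x - a) ^ 2 / (a ^ 2 * x) := by
  field_simp
  ring

section SumInv

variable {ι : Type*} [Fintype ι] {x : ι → ℝ} {a : ℝ}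

theorem sum_inv_eq_card_div_add_sum_sq_div (hx : ∀ i, x i ≠ 0) (ha : a ≠ 0)
    (hsum : ∑ i, x i = Fintype.card ι * a) :
    ∑ i, (x i)⁻¹ = Fintype.card ι / a + ∑ i, (x i - a) ^ 2 / (a ^ 2 * x i) := by
  have htangent : ∑ i, (2 * a - x i) / a ^ 2 = Fintype.card ι / a := by
    rw [← sum_div, sum_sub_distrib, hsum, sum_const, card_univ, nsmul_eq_mul]
    field_simp
    ring
  rw [← htangent, ← sum_add_distrib]
  exact sum_congr rfl fun i _ ↦ inv_eq_tangent_add_sq_div (hx i) ha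

theorem card_div_le_sum_inv (hx : ∀ i, 0 < x i) (ha : 0 < a)
    (hsum : ∑ i, x i = Fintype.card ι * a) : Fintype.card ι / a ≤ ∑ i, (x i)⁻¹ := by
  rw [sum_inv_eq_card_div_add_sum_sq_div (fun i ↦ (hx i).ne') ha.ne' hsum]
  exact le_add_of_nonneg_right (sum_nonneg fun i _ ↦ by have := hx i; positivity)

theorem eq_of_sum_inv_eq_card_div (hx : ∀ i, 0 < x i) (ha : 0 < a)
    (hsum : ∑ i, x i = Fintype.card ι * a) (heq : ∑ i, (x i)⁻¹ = Fintype.card ι / a) (i : ι) :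
    x i = a := by
  rw [sum_inv_eq_card_div_add_sum_sq_div (fun i ↦ (hx i).ne') ha.ne' hsum, add_eq_left,
    sum_eq_zero_iff_of_nonneg fun i _ ↦ by have := hx i; positivity] at heq
  have hden : a ^ 2 * x i ≠ 0 := by have := hx i; positivity
  have hterm := heq i (mem_univ i)
  rwa [div_eq_zero_iff, or_iff_left hden, sq_eq_zero_iff, sub_eq_zero] at hterm

end SumInv

theorem eigMajorizes_smul_one {n : ℕ} {α : ℕ → ℝ} {c : ℝ}
    (h : (c • (1 : Matrix (Fin n) (Fin n) ℝ)).IsHermitian) (hbound : ∀ i, α i ≤ c)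
    (htotal : n * c = ∑' i, α i) : EigMajorizes h α := by
  refine ⟨Equiv.refl _, fun i j _ ↦ by simp [h.eigenvalues_smul_one], fun m hm ↦ ?_, ?_⟩
  · calc ∑ i ∈ range m, α i ≤ ∑ _i ∈ range m, c := sum_le_sum fun i _ ↦ hbound i
      _ = _ := by simp [h.eigenvalues_smul_one, Fin.card_filter_val_lt, hm.le]
  · simp [h.eigenvalues_smul_one, htotal]

theorem scaled_identity_uniquely_minimizes_trace_inverse
    {n : ℕ} (hn : 0 < n) (α : ℕ → ℝ) (hpos : ∀ i, 0 < α i)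
    (hmono : ∀ i j, i ≤ j → α j ≤ α i) (hsum : Summable α)
    (a : ℝ) (ha : a = (1 / n) * ∑' i, α i) (hα1 : α 0 ≤ a) :
    (∃ h1 : (a • (1 : Matrix (Fin n) (Fin n) ℝ)).PosDef, EigMajorizes h1.1 α) ∧
    Matrix.trace (a • (1 : Matrix (Fin n) (Fin n) ℝ))⁻¹ = n / a ∧
    ∀ (G : Matrix (Fin n) (Fin n) ℝ) (hG : G.PosDef), EigMajorizes hG.1 α →
      (n : ℝ) / a ≤ Matrix.trace G⁻¹ ∧
      (Matrix.trace G⁻¹ = n / a → G = a • (1 : Matrix (Fin n) (Fin n) ℝ)) := by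
  have hpos_total : 0 < ∑' i, α i := hsum.tsum_pos (fun i ↦ (hpos i).le) 0 (hpos 0)
  have ha_pos : 0 < a := by rw [ha]; positivity
  have htotal : n * a = ∑' i, α i := by rw [ha]; field_simp
  have hPD : (a • (1 : Matrix (Fin n) (Fin n) ℝ)).PosDef := PosDef.one.smul ha_pos
  refine ⟨⟨hPD, eigMajorizes_smul_one hPD.1 (fun i ↦ (hmono 0 i i.zero_le).trans hα1) htotal⟩,
    ?_, fun G hG hmaj ↦ ?_⟩
  · simp [hPD.trace_inv, hPD.1.eigenvalues_smul_one, div_eq_mul_inv]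
  obtain ⟨-, -, -, hsum_eigenvalues⟩ := hmaj
  have hcard : (Fintype.card (Fin n) : ℝ) = n := by rw [Fintype.card_fin]
  have hsum_eq : ∑ i, hG.1.eigenvalues i = Fintype.card (Fin n) * a := by
    rw [hsum_eigenvalues, hcard, htotal]
  rw [hG.trace_inv, ← hcard]
  exact ⟨card_div_le_sum_inv hG.eigenvalues_pos ha_pos hsum_eq, fun heq ↦
    hG.1.eq_smul_one_of_eigenvalues_eq
      (eq_of_sum_inv_eq_card_div hG.eigenvalues_pos ha_pos hsum_eq heq)⟩
end

section
/- Let (v_i)_{i∈ℕ} be a square-summable nonzero family in ℝⁿ. Define the normalized frame potential NFP := (Σ_i Σ_j |⟨v_i, v_j⟩|²)/(Σ_i ‖v_i‖²)². Then NFP ≥ 1/dim(span{v_i}), in particular NFP ≥ 1/n. -/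
/-!
Write the vectors in an orthonormal basis of their span `W`, of dimension `d`, and let
`M a b = ∑ i, v_i(a) v_i(b)` be the matrix of the frame operator `∑ i, v_i v_iᵀ`. Then
`∑ i, ‖v_i‖² = tr M` and `∑ i j, ⟪v_i, v_j⟫² = ‖M‖_F²`, so by Cauchy–Schwarz on the diagonal
`(∑ i, ‖v_i‖²)² = (tr M)² ≤ d ∑ a, M a a ² ≤ d ‖M‖_F²`, and `d ≤ n`.
-/

open scoped RealInnerProductSpace

theorem summable_mul_of_summable_sq {α : Type*} {g h : α → ℝ}
    (hg : Summable fun i => g i ^ 2) (hh : Summable fun i => h i ^ 2) :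
    Summable fun i => g i * h i := by
  refine Summable.of_norm_bounded (hg.add hh) fun i => ?_
  rw [Real.norm_eq_abs, abs_le]
  constructor <;> nlinarith [sq_nonneg (g i + h i), sq_nonneg (g i - h i)]

section SecondMoment

variable {ι : Type*} [Fintype ι] (f : ℕ → ι → ℝ)

noncomputable def secondMoment (a b : ι) : ℝ := ∑' i, f i a * f i b

variable {f}

theorem tsum_sum_sq_eq_sum_secondMoment (hf : ∀ a, Summable fun i => f i a ^ 2) :
    ∑' i, ∑ a, f i a ^ 2 = ∑ a, secondMoment f a a := by
  rw [Summable.tsum_finsetSum fun a _ => hf a]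
  simp only [secondMoment, sq]

theorem tsum_sum_sum_mul_eq_sum_sum_mul_secondMoment (hf : ∀ a, Summable fun i => f i a ^ 2)
    (c : ι → ι → ℝ) :
    ∑' j, ∑ a, ∑ b, c a b * (f j a * f j b) = ∑ a, ∑ b, c a b * secondMoment f a b := by
  have hS a b := summable_mul_of_summable_sq (hf a) (hf b)
  rw [Summable.tsum_finsetSum fun a _ => summable_sum fun b _ => (hS a b).mul_left _]
  refine Finset.sum_congr rfl fun a _ => ?_
  rw [Summable.tsum_finsetSum fun b _ => (hS a b).mul_left _]
  exact Finset.sum_congr rfl fun b _ => tsum_mul_left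

theorem tsum_tsum_sq_sum_mul_eq_sum_sum_secondMoment_sq
    (hf : ∀ a, Summable fun i => f i a ^ 2) :
    ∑' i, ∑' j, (∑ a, f i a * f j a) ^ 2 = ∑ a, ∑ b, secondMoment f a b ^ 2 := by
  have hexpand : ∀ i j, (∑ a, f i a * f j a) ^ 2
      = ∑ a, ∑ b, (f i a * f i b) * (f j a * f j b) := fun i j => by
    rw [sq, Finset.sum_mul_sum]
    exact Finset.sum_congr rfl fun a _ => Finset.sum_congr rfl fun b _ => by ring
  calc ∑' i, ∑' j, (∑ a, f i a * f j a) ^ 2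
      = ∑' i, ∑ a, ∑ b, secondMoment f a b * (f i a * f i b) := by
        refine tsum_congr fun i => ?_
        simp only [hexpand, tsum_sum_sum_mul_eq_sum_sum_mul_secondMoment hf, mul_comm]
    _ = ∑ a, ∑ b, secondMoment f a b ^ 2 := by
        simp only [tsum_sum_sum_mul_eq_sum_sum_mul_secondMoment hf, sq]

end SecondMoment

theorem sq_sum_diag_le_card_mul_sum_sq {ι : Type*} [Fintype ι] (M : ι → ι → ℝ) :
    (∑ a, M a a) ^ 2 ≤ Fintype.card ι * ∑ a, ∑ b, M a b ^ 2 :=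
  calc (∑ a, M a a) ^ 2 ≤ Fintype.card ι * ∑ a, M a a ^ 2 := sq_sum_le_card_mul_sum_sq
    _ ≤ Fintype.card ι * ∑ a, ∑ b, M a b ^ 2 := by
      gcongr with a
      exact Finset.single_le_sum (f := fun b => M a b ^ 2) (fun _ _ => sq_nonneg _)
        (Finset.mem_univ a)

theorem sq_tsum_norm_sq_le_finrank_mul_tsum_tsum_inner_sq {E : Type*} [NormedAddCommGroup E]
    [InnerProductSpace ℝ E] [FiniteDimensional ℝ E] (v : ℕ → E)
    (hsq : Summable fun i => ‖v i‖ ^ 2) :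
    (∑' i, ‖v i‖ ^ 2) ^ 2 ≤ Module.finrank ℝ E * ∑' i, ∑' j, ⟪v i, v j⟫ ^ 2 := by
  let b := stdOrthonormalBasis ℝ E
  let f : ℕ → Fin (Module.finrank ℝ E) → ℝ := fun i a => ⟪b a, v i⟫
  have hf : ∀ a, Summable fun i => f i a ^ 2 := fun a =>
    hsq.of_nonneg_of_le (fun _ => sq_nonneg _) fun i => b.sum_sq_inner_right (v i) ▸
      Finset.single_le_sum (f := fun a => ⟪b a, v i⟫ ^ 2) (fun _ _ => sq_nonneg _)
        (Finset.mem_univ a)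
  have hnorm : ∀ i, ‖v i‖ ^ 2 = ∑ a, f i a ^ 2 := fun i => (b.sum_sq_inner_right (v i)).symm
  have hinner : ∀ i j, ⟪v i, v j⟫ = ∑ a, f i a * f j a := fun i j => by
    simp only [f, ← b.sum_inner_mul_inner (v i) (v j), real_inner_comm (v i)]
  simp only [hnorm, hinner, tsum_sum_sq_eq_sum_secondMoment hf,
    tsum_tsum_sq_sum_mul_eq_sum_sum_secondMoment_sq hf]
  simpa using sq_sum_diag_le_card_mul_sum_sq (secondMoment f)

theorem normalized_frame_potential_lower_bound
    {n : ℕ} (v : ℕ → EuclideanSpace ℝ (Fin n))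
    (hsq : Summable (fun i => ‖v i‖ ^ 2))
    (hpos : 0 < ∑' i, ‖v i‖ ^ 2) :
    (1 : ℝ) / (Module.finrank ℝ (Submodule.span ℝ (Set.range v))) ≤
      (∑' i, ∑' j, ⟪v i, v j⟫ ^ 2) / (∑' i, ‖v i‖ ^ 2) ^ 2 ∧
    (1 : ℝ) / n ≤ (∑' i, ∑' j, ⟪v i, v j⟫ ^ 2) / (∑' i, ‖v i‖ ^ 2) ^ 2 := by
  set W := Submodule.span ℝ (Set.range v)
  have key : (∑' i, ‖v i‖ ^ 2) ^ 2 ≤ Module.finrank ℝ W * ∑' i, ∑' j, ⟪v i, v j⟫ ^ 2 :=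
    sq_tsum_norm_sq_le_finrank_mul_tsum_tsum_inner_sq
      (fun i => (⟨v i, Submodule.subset_span ⟨i, rfl⟩⟩ : W)) hsq
  have hd : (0 : ℝ) < Module.finrank ℝ W := by
    refine Nat.cast_pos.2 (Nat.pos_of_ne_zero fun hd => ?_)
    rw [hd, Nat.cast_zero, zero_mul] at key
    exact (pow_pos hpos 2).not_ge key
  have hW : 1 / (Module.finrank ℝ W : ℝ) ≤
      (∑' i, ∑' j, ⟪v i, v j⟫ ^ 2) / (∑' i, ‖v i‖ ^ 2) ^ 2 := by
    rw [div_le_div_iff₀ hd (by positivity)]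
    linarith
  refine ⟨hW, le_trans (one_div_le_one_div_of_le hd ?_) hW⟩
  exact_mod_cast (Submodule.finrank_le W).trans_eq (finrank_euclideanSpace_fin)
end
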